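/- arXiv:1911.00254 — 2 statements merged into one kernel-verified Lean document; each statement's English description precedes it below -/
import Mathlib

section
/- Let N ∈ ℕ and let R be a commutative ring with elements H, z ∈ R such that H^{N+1} = 0 and H + r·z is a unit of R for every integer r ≥ 1. Let D : R⟦Q⟧ → R⟦Q⟧ be the R-linear operator sending Σ_d a_d Q^d to Σ_d (d·z)·a_d Q^d (the formal operator z·Q·∂_Q). Define Givental's cohomological J-function J = Σ_{d≥0} (∏_{r=1}^{d}(H + r·z))^{-(N+1)} · Q^d ∈ R⟦Q⟧. Then (H·id + D)^{N+1} J = Q·J, where H·id denotes multiplication by H. -/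
lemma iter_coeff {R : Type*} [CommRing R] (H z : R) (n : ℕ) (f : PowerSeries R) (d : ℕ) :
    PowerSeries.coeff d
      ((fun f : PowerSeries R =>
        PowerSeries.C H * f +
          PowerSeries.mk fun d => (d : R) * z * PowerSeries.coeff d f)^[n] f)
      = (H + (d : R) * z) ^ n * PowerSeries.coeff d f := by
  induction n with
  | zero => simp
  | succ n ih =>
    rw [Function.iterate_succ_apply']
    simp only [map_add, PowerSeries.coeff_C_mul, PowerSeries.coeff_mk, ih]
    ring

/-- Givental's cohomological J-function of `ℙ^N` satisfies its differential equation: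
in a commutative ring `R` with `H^{N+1} = 0` and `H + rz` a unit for every `r ≥ 1`, the
series `J = ∑_{d≥0} (∏_{r=1}^d (H + rz))^{-(N+1)} Q^d` satisfies
`(H·id + D)^{N+1} J = Q·J`, where `D = zQ∂_Q` multiplies the d-th coefficient by `d·z`. -/
theorem stmt14 {R : Type*} [CommRing R] (N : ℕ) (H z : R)
    (hH : H ^ (N + 1) = 0)
    (hu : ∀ r : ℕ, 1 ≤ r → IsUnit (H + (r : R) * z)) :
    (fun f : PowerSeries R =>
        PowerSeries.C H * f +
          PowerSeries.mk fun d => (d : R) * z * PowerSeries.coeff d f)^[N + 1]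
        (PowerSeries.mk fun d =>
          Ring.inverse ((∏ r ∈ Finset.range d, (H + ((r : R) + 1) * z)) ^ (N + 1)))
      = PowerSeries.X *
          PowerSeries.mk fun d =>
            Ring.inverse ((∏ r ∈ Finset.range d, (H + ((r : R) + 1) * z)) ^ (N + 1)) := by
  ext d
  rw [iter_coeff, PowerSeries.coeff_mk]
  cases d with
  | zero =>
    simp [hH]
  | succ d =>
    rw [PowerSeries.coeff_succ_X_mul, PowerSeries.coeff_mk]
    have hb : IsUnit ((H + ((d : R) + 1) * z) ^ (N + 1)) := by
      refine IsUnit.pow _ ?_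
      simpa [Nat.cast_add] using hu (d + 1) (Nat.le_add_left 1 d)
    have hc : ((d + 1 : ℕ) : R) = (d : R) + 1 := by push_cast; ring
    rw [hc, Finset.prod_range_succ, mul_pow, Ring.mul_inverse_rev,
      Ring.mul_inverse_cancel_left _ _ hb]
end

section
/- Let N ∈ ℕ and let R be a commutative ring with elements H, z, λ₀, …, λ_N ∈ R such that ∏_{i=0}^{N}(H - λ_i) = 0 and such that H - λ_i + r·z is a unit of R for every integer r ≥ 1 and every i. Let D : R⟦Q⟧ → R⟦Q⟧ send Σ_d a_d Q^d to Σ_d (d·z)·a_d Q^d. Define the equivariant cohomological J-function J = Σ_{d≥0} ( ∏_{i=0}^{N} ∏_{r=1}^{d} (H - λ_i + r·z) )^{-1} · Q^d ∈ R⟦Q⟧. Then ( ∏_{i=0}^{N} ((H - λ_i)·id + D) ) J = Q·J. -/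
lemma foldr_coeff {R : Type*} [CommRing R] (z : R) (d : ℕ) :
    ∀ (l : List R) (f : PowerSeries R),
      PowerSeries.coeff d
        ((l.map fun c => fun g : PowerSeries R =>
            PowerSeries.C c * g +
              PowerSeries.mk fun e => (e : R) * z * PowerSeries.coeff e g).foldr (· ∘ ·) id f)
        = (l.map fun c => c + (d : R) * z).prod * PowerSeries.coeff d f := by
  intro l
  induction l with
  | nil => intro f; simp
  | cons c t ih =>
      intro f
      simp only [List.map_cons, List.foldr_cons, Function.comp_apply, List.prod_cons]
      rw [map_add, PowerSeries.coeff_C_mul, PowerSeries.coeff_mk, ih]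
      ring

/-- The equivariant cohomological J-function of `ℙ^N` satisfies its differential equation:
in a commutative ring `R` with `∏ᵢ(H-λᵢ) = 0` and `H - λᵢ + rz` a unit for every `r ≥ 1`,
the series `J = ∑_{d≥0} (∏ᵢ∏_{r=1}^d (H - λᵢ + rz))⁻¹ Q^d` satisfies
`(∏ᵢ ((H-λᵢ)·id + D)) J = Q·J`, where `D = zQ∂_Q` multiplies the d-th coefficient by `d·z`
and the product is composition of the pairwise commuting operators. -/
theorem stmt16 {R : Type*} [CommRing R] (N : ℕ) (H z : R) (lam : Fin (N + 1) → R)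
    (hrel : ∏ i, (H - lam i) = 0)
    (hu : ∀ (i : Fin (N + 1)) (r : ℕ), 1 ≤ r → IsUnit (H - lam i + (r : R) * z)) :
    ((List.ofFn fun i : Fin (N + 1) =>
        fun f : PowerSeries R =>
          PowerSeries.C (H - lam i) * f +
            PowerSeries.mk fun d => (d : R) * z * PowerSeries.coeff d f).foldr (· ∘ ·) id)
        (PowerSeries.mk fun d =>
          Ring.inverse (∏ i, ∏ r ∈ Finset.range d, (H - lam i + ((r : R) + 1) * z)))
      = PowerSeries.X *
          PowerSeries.mk fun d =>
            Ring.inverse (∏ i, ∏ r ∈ Finset.range d, (H - lam i + ((r : R) + 1) * z)) := by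
  have hofn : (List.ofFn fun i : Fin (N + 1) =>
      fun f : PowerSeries R =>
        PowerSeries.C (H - lam i) * f +
          PowerSeries.mk fun d => (d : R) * z * PowerSeries.coeff d f)
      = (List.ofFn fun i => H - lam i).map fun c => fun g : PowerSeries R =>
          PowerSeries.C c * g +
            PowerSeries.mk fun e => (e : R) * z * PowerSeries.coeff e g := by
    rw [List.map_ofFn]; rfl
  ext d
  rw [hofn, foldr_coeff]
  have hprod : ∀ d : ℕ, ((List.ofFn fun i => H - lam i).map fun c => c + (d : R) * z).prod
      = ∏ i, (H - lam i + (d : R) * z) := by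
    intro d; rw [List.map_ofFn, List.prod_ofFn]; rfl
  rw [hprod]
  cases d with
  | zero =>
      simp only [Nat.cast_zero, zero_mul, add_zero, Finset.range_zero, Finset.prod_empty,
        Finset.prod_const_one, Ring.inverse_one, PowerSeries.coeff_mk, mul_one]
      rw [hrel]
      have : (PowerSeries.coeff 0) (PowerSeries.X * PowerSeries.mk fun d =>
          Ring.inverse (∏ i, ∏ r ∈ Finset.range d, (H - lam i + ((r : R) + 1) * z))) = 0 := by
        simp [PowerSeries.coeff_zero_eq_constantCoeff]
      rw [this]
  | succ e =>
      rw [PowerSeries.coeff_succ_X_mul, PowerSeries.coeff_mk, PowerSeries.coeff_mk]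
      have hsplit : (∏ i, ∏ r ∈ Finset.range (e + 1), (H - lam i + ((r : R) + 1) * z))
          = (∏ i, ∏ r ∈ Finset.range e, (H - lam i + ((r : R) + 1) * z)) *
            ∏ i, (H - lam i + ((e : R) + 1) * z) := by
        rw [← Finset.prod_mul_distrib]
        exact Finset.prod_congr rfl fun i _ => Finset.prod_range_succ _ e
      have hA : IsUnit (∏ i, ∏ r ∈ Finset.range e, (H - lam i + ((r : R) + 1) * z)) := by
        refine Finset.prod_induction _ IsUnit (fun a b ha hb => ha.mul hb) isUnit_one ?_
        intro i _
        refine Finset.prod_induction _ IsUnit (fun a b ha hb => ha.mul hb) isUnit_one ?_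
        intro r _
        have := hu i (r + 1) (by omega)
        simpa [Nat.cast_add] using this
      have hB : IsUnit (∏ i, (H - lam i + ((e : R) + 1) * z)) := by
        refine Finset.prod_induction _ IsUnit (fun a b ha hb => ha.mul hb) isUnit_one ?_
        intro i _
        have := hu i (e + 1) (by omega)
        simpa [Nat.cast_add] using this
      rw [hsplit, Ring.mul_inverse_rev]
      have hd : ((e + 1 : ℕ) : R) = (e : R) + 1 := by push_cast; ring
      rw [hd]
      calc (∏ i, (H - lam i + ((e : R) + 1) * z)) *
            (Ring.inverse (∏ i, (H - lam i + ((e : R) + 1) * z)) *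
              Ring.inverse (∏ i, ∏ r ∈ Finset.range e, (H - lam i + ((r : R) + 1) * z)))
          = ((∏ i, (H - lam i + ((e : R) + 1) * z)) *
              Ring.inverse (∏ i, (H - lam i + ((e : R) + 1) * z))) *
              Ring.inverse (∏ i, ∏ r ∈ Finset.range e, (H - lam i + ((r : R) + 1) * z)) := by ring
        _ = Ring.inverse (∏ i, ∏ r ∈ Finset.range e, (H - lam i + ((r : R) + 1) * z)) := by
            rw [Ring.mul_inverse_cancel _ hB, one_mul]
end
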